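/- arXiv:2412.03857 — 12 statements merged into one kernel-verified Lean document; each statement's English description precedes it below -/
import Mathlib

section
/- Let φ, ψ : ℕ₊ → ℕ₊ be strictly increasing functions and let α, β ∈ [0,1]. If the asymptotic density of the range of φ equals α and the asymptotic density of the range of ψ equals β, then the asymptotic density of the range of φ ∘ ψ exists and equals α·β. -/
/-- The asymptotic density of a set `A` of positive integers is `d` if
`#(A ∩ [1,n]) / n → d` as `n → ∞`. -/
def HasDensity (A : Set ℕ+) (d : ℝ) : Prop :=
  Filter.Tendsto (fun n : ℕ+ => ((A ∩ Set.Iic n).ncard : ℝ) / (n : ℝ))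
    Filter.atTop (nhds d)

open Finset Filter

/-- counting function: number of `k` with `f k ≤ n`. -/
private def cnt (f : ℕ+ → ℕ+) (n : ℕ+) : ℕ :=
  ((Finset.Iic n).filter (fun k => f k ≤ n)).card

private lemma pnat_card_Iic (n : ℕ+) : (Finset.Iic n).card = n := by
  have : (Finset.Iic n) = Finset.Icc 1 n := by
    ext k; simp [PNat.one_le]
  rw [this, PNat.card_Icc]
  simp

private lemma cnt_le (f : ℕ+ → ℕ+) (n : ℕ+) : cnt f n ≤ n := by
  calc cnt f n ≤ (Finset.Iic n).card := Finset.card_filter_le _ _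
    _ = n := pnat_card_Iic n

/-- key: membership in the counted set is determined by the count. -/
private lemma cnt_iff {f : ℕ+ → ℕ+} (hf : StrictMono f) (n m : ℕ+) :
    f m ≤ n ↔ (m : ℕ) ≤ cnt f n := by
  constructor
  · intro h
    have hsub : Finset.Iic m ⊆ (Finset.Iic n).filter (fun k => f k ≤ n) := by
      intro k hk
      simp only [Finset.mem_Iic] at hk
      have hfk : f k ≤ n := le_trans (hf.monotone hk) h
      simp only [Finset.mem_filter, Finset.mem_Iic]
      exact ⟨le_trans (hf.le_apply) hfk, hfk⟩
    have := Finset.card_le_card hsub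
    rwa [pnat_card_Iic] at this
  · intro h
    by_contra hc
    push_neg at hc
    have hsub : (Finset.Iic n).filter (fun k => f k ≤ n) ⊆ Finset.Iio m := by
      intro k hk
      simp only [Finset.mem_filter, Finset.mem_Iic] at hk
      simp only [Finset.mem_Iio]
      by_contra hkm
      push_neg at hkm
      exact absurd (le_trans (hf.monotone hkm) hk.2) (not_le.mpr hc)
    have hcard := Finset.card_le_card hsub
    have : (Finset.Iio m).card = (m : ℕ) - 1 := by
      have : Finset.Iio m = Finset.Ico 1 m := by ext k; simp [PNat.one_le]
      rw [this, PNat.card_Ico]; simp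
    rw [this] at hcard
    unfold cnt at h
    have hm : 0 < (m : ℕ) := m.pos
    omega

private lemma ncard_eq_cnt {f : ℕ+ → ℕ+} (hf : StrictMono f) (n : ℕ+) :
    (Set.range f ∩ Set.Iic n).ncard = cnt f n := by
  have hset : Set.range f ∩ Set.Iic n =
      ↑(((Finset.Iic n).filter (fun k => f k ≤ n)).image f) := by
    ext x
    simp only [Set.mem_inter_iff, Set.mem_range, Set.mem_Iic, Finset.coe_image,
      Set.mem_image, Finset.mem_coe, Finset.mem_filter, Finset.mem_Iic]
    constructor
    · rintro ⟨⟨k, rfl⟩, hx⟩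
      exact ⟨k, ⟨le_trans hf.le_apply hx, hx⟩, rfl⟩
    · rintro ⟨k, ⟨-, hk⟩, rfl⟩
      exact ⟨⟨k, rfl⟩, hk⟩
  rw [hset, Set.ncard_coe_finset, Finset.card_image_of_injective _ hf.injective]
  rfl

private lemma cnt_comp {φ ψ : ℕ+ → ℕ+} (hφ : StrictMono φ) (hψ : StrictMono ψ)
    (n a : ℕ+) (ha : (a : ℕ) = cnt φ n) : cnt (φ ∘ ψ) n = cnt ψ a := by
  have han : a ≤ n := by
    have h1 : (a : ℕ) ≤ (n : ℕ) := ha ▸ cnt_le φ n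
    exact_mod_cast h1
  unfold cnt
  have hcond : ∀ k ∈ Finset.Iic n, ((φ ∘ ψ) k ≤ n ↔ ψ k ≤ a) := by
    intro k _
    rw [show (φ ∘ ψ) k = φ (ψ k) from rfl, cnt_iff hφ n (ψ k), ← ha]
    exact_mod_cast Iff.rfl
  rw [Finset.filter_congr hcond]
  congr 1
  ext k
  simp only [Finset.mem_filter, Finset.mem_Iic]
  constructor
  · rintro ⟨-, h⟩
    exact ⟨le_trans hψ.le_apply h, h⟩
  · rintro ⟨hk, h⟩
    exact ⟨le_trans hk han, h⟩

private lemma cnt_tendsto {f : ℕ+ → ℕ+} (hf : StrictMono f) :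
    Tendsto (fun n => cnt f n) atTop atTop := by
  rw [tendsto_atTop]
  intro b
  rw [eventually_atTop]
  refine ⟨f b.succPNat, fun n hn => ?_⟩
  have : (b.succPNat : ℕ) ≤ cnt f n := (cnt_iff hf n b.succPNat).mp hn
  simp [Nat.succPNat] at this
  omega

/-- if `φ, ψ : ℕ₊ → ℕ₊` are strictly increasing, the density of the
range of `φ` is `α ∈ [0,1]` and the density of the range of `ψ` is `β ∈ [0,1]`,
then the density of the range of `φ ∘ ψ` exists and equals `α * β`. -/
theorem stmt1 (φ ψ : ℕ+ → ℕ+) (hφ : StrictMono φ) (hψ : StrictMono ψ)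
    (α β : ℝ) (hα : α ∈ Set.Icc (0 : ℝ) 1) (hβ : β ∈ Set.Icc (0 : ℝ) 1)
    (hφd : HasDensity (Set.range φ) α) (hψd : HasDensity (Set.range ψ) β) :
    HasDensity (Set.range (φ ∘ ψ)) (α * β) := by
  unfold HasDensity at *
  have hφc : Tendsto (fun n : ℕ+ => ((cnt φ n : ℕ) : ℝ) / (n : ℝ)) atTop (nhds α) :=
    hφd.congr (fun n => by rw [ncard_eq_cnt hφ])
  have hψc : Tendsto (fun n : ℕ+ => ((cnt ψ n : ℕ) : ℝ) / (n : ℝ)) atTop (nhds β) :=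
    hψd.congr (fun n => by rw [ncard_eq_cnt hψ])
  set A : ℕ+ → ℕ+ := fun n => (cnt φ n).toPNat' with hAdef
  have hA : Tendsto A atTop atTop := by
    rw [tendsto_atTop]
    intro b
    filter_upwards [(cnt_tendsto hφ).eventually_ge_atTop (b : ℕ)] with n hn
    have hbpos : 0 < (b : ℕ) := b.pos
    have : (A n : ℕ) = cnt φ n := PNat.toPNat'_coe (lt_of_lt_of_le hbpos hn)
    exact_mod_cast this ▸ hn
  have hψA : Tendsto (fun n : ℕ+ => ((cnt ψ (A n) : ℕ) : ℝ) / ((A n) : ℝ)) atTop (nhds β) :=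
    hψc.comp hA
  have hprod := hψA.mul hφc
  rw [mul_comm β α] at hprod
  refine hprod.congr' ?_
  filter_upwards [eventually_ge_atTop (φ 1), (cnt_tendsto hφ).eventually_ge_atTop 1]
    with n hn1 hpos
  have hAn : (A n : ℕ) = cnt φ n := PNat.toPNat'_coe hpos
  have hcomp : cnt (φ ∘ ψ) n = cnt ψ (A n) := cnt_comp hφ hψ n (A n) hAn
  rw [ncard_eq_cnt (hφ.comp hψ), hcomp]
  have hAne : ((A n) : ℝ) ≠ 0 := by
    exact_mod_cast (A n).pos.ne'
  have hAcast : ((A n) : ℝ) = ((cnt φ n : ℕ) : ℝ) := by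
    rw [← hAn]
  rw [← hAcast]
  field_simp
end

section
/- Suppose 0 < α < β ≤ 1 and φ : ℕ₊ → ℕ₊ is strictly increasing. If the set { n / φ(n)^α : n ∈ ℕ₊ } is bounded, then the β-density of the range of φ exists and equals 0. Consequently, if the α-density of the range of φ exists and is finite, then the β-density of the range of φ equals 0. -/
/-- The `α`-density of a set `A` of positive integers is `d` if
`#(A ∩ [1,n]) / n^α → d` as `n → ∞` (here `n^α` is the real power `rpow`). -/
def HasAlphaDensity (α : ℝ) (A : Set ℕ+) (d : ℝ) : Prop :=
  Filter.Tendsto (fun n : ℕ+ => ((A ∩ Set.Iic n).ncard : ℝ) / (n : ℝ) ^ α)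
    Filter.atTop (nhds d)

/-!
Both parts reduce to a growth bound on the counting function `n ↦ #(A ∩ [1,n])`:
if it is `O(n^α)` then dividing by `n^β` leaves `O(n^(α-β)) → 0`. An `α`-density
makes the counting function `O(n^α)` at once. Under the bound `k ≤ M φ(k)^α`, every
`k` with `φ(k) ≤ n` satisfies `k ≤ |M| n^α`, so injectivity of `φ` bounds the count
by `|M| n^α`.
-/

open Filter Set Asymptotics

lemma tendsto_pnat_cast_rpow_atTop_nhds_zero {γ : ℝ} (hγ : γ < 0) :
    Tendsto (fun n : ℕ+ => (n : ℝ) ^ γ) atTop (nhds 0) := by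
  have hcast : Tendsto (fun n : ℕ+ => (n : ℝ)) atTop atTop :=
    tendsto_natCast_atTop_atTop.comp tendsto_PNat_val_atTop_atTop
  simpa [Function.comp_def] using (tendsto_rpow_neg_atTop (neg_pos.mpr hγ)).comp hcast

lemma hasAlphaDensity_zero_of_isBigO {A : Set ℕ+} {α β : ℝ} (hαβ : α < β)
    (h : (fun n : ℕ+ => ((A ∩ Iic n).ncard : ℝ)) =O[atTop] fun n => (n : ℝ) ^ α) :
    HasAlphaDensity β A 0 := by
  have hdiv := h.mul (isBigO_refl (fun n : ℕ+ => ((n : ℝ) ^ β)⁻¹) atTop)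
  refine (hdiv.trans_tendsto ?_).congr fun n => (div_eq_mul_inv _ _).symm
  refine (tendsto_pnat_cast_rpow_atTop_nhds_zero (sub_neg.mpr hαβ)).congr fun n => ?_
  rw [Real.rpow_sub (by positivity), div_eq_mul_inv]

lemma HasAlphaDensity.isBigO {A : Set ℕ+} {α d : ℝ} (hd : HasAlphaDensity α A d) :
    (fun n : ℕ+ => ((A ∩ Iic n).ncard : ℝ)) =O[atTop] fun n => (n : ℝ) ^ α := by
  exact ((hd.isBigO_one ℝ).mul (isBigO_refl (fun n : ℕ+ => (n : ℝ) ^ α) atTop)).congr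
    (fun n => div_mul_cancel₀ _ (by positivity)) fun n => one_mul _

lemma ncard_range_inter_Iic_le_floor {φ : ℕ+ → ℕ+} (hφ : Function.Injective φ) {n : ℕ+}
    {C : ℝ} (h : ∀ k, φ k ≤ n → (k : ℝ) ≤ C) : (range φ ∩ Iic n).ncard ≤ ⌊C⌋₊ := by
  rw [inter_comm, ← image_preimage_eq_inter_range, ncard_image_of_injective _ hφ]
  calc (φ ⁻¹' Iic n).ncard ≤ (↑(Finset.Icc 1 ⌊C⌋₊) : Set ℕ).ncard :=
        ncard_le_ncard_of_injOn PNat.val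
          (fun k hk => by simpa using ⟨(one_le : 1 ≤ k), Nat.le_floor (h k hk)⟩)
          PNat.coe_injective.injOn (Finset.finite_toSet _)
    _ = ⌊C⌋₊ := by simp

lemma isBigO_ncard_range_inter_Iic {φ : ℕ+ → ℕ+} (hφ : Function.Injective φ) {α M : ℝ}
    (hα : 0 ≤ α) (hM : ∀ k : ℕ+, (k : ℝ) / (φ k : ℝ) ^ α ≤ M) :
    (fun n : ℕ+ => ((range φ ∩ Iic n).ncard : ℝ)) =O[atTop] fun n => (n : ℝ) ^ α := by
  refine .of_bound |M| (.of_forall fun n => ?_)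
  have hk : ∀ k, φ k ≤ n → (k : ℝ) ≤ |M| * (n : ℝ) ^ α := fun k hkn =>
    calc (k : ℝ) ≤ M * (φ k : ℝ) ^ α := (div_le_iff₀ (by positivity)).mp (hM k)
      _ ≤ |M| * (φ k : ℝ) ^ α := by gcongr; exact le_abs_self M
      _ ≤ |M| * (n : ℝ) ^ α := by gcongr; exact_mod_cast hkn
  rw [Real.norm_natCast, Real.norm_of_nonneg (by positivity)]
  exact (Nat.cast_le.mpr (ncard_range_inter_Iic_le_floor hφ hk)).trans
    (Nat.floor_le (by positivity))

theorem stmt2_general (α β : ℝ) (h0 : 0 < α) (hαβ : α < β)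
    (φ : ℕ+ → ℕ+) (hφ : StrictMono φ) :
    ((∃ M : ℝ, ∀ n : ℕ+, (n : ℝ) / (φ n : ℝ) ^ α ≤ M) →
        HasAlphaDensity β (Set.range φ) 0) ∧
    ((∃ d : ℝ, HasAlphaDensity α (Set.range φ) d) →
        HasAlphaDensity β (Set.range φ) 0) :=
  ⟨fun ⟨_, hM⟩ => hasAlphaDensity_zero_of_isBigO hαβ
      (isBigO_ncard_range_inter_Iic hφ.injective h0.le hM),
    fun ⟨_, hd⟩ => hasAlphaDensity_zero_of_isBigO hαβ hd.isBigO⟩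

/-- suppose `0 < α < β ≤ 1` and `φ : ℕ₊ → ℕ₊` is strictly increasing.
If `{ n / φ(n)^α : n ∈ ℕ₊ }` is bounded, then the `β`-density of the range of `φ`
exists and equals `0`.  Consequently, if the `α`-density of the range of `φ` exists
(and is finite), then the `β`-density of the range of `φ` equals `0`. -/
theorem stmt2 (α β : ℝ) (h0 : 0 < α) (hαβ : α < β) (hβ1 : β ≤ 1)
    (φ : ℕ+ → ℕ+) (hφ : StrictMono φ) :
    ((∃ M : ℝ, ∀ n : ℕ+, (n : ℝ) / (φ n : ℝ) ^ α ≤ M) →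
        HasAlphaDensity β (Set.range φ) 0) ∧
    ((∃ d : ℝ, HasAlphaDensity α (Set.range φ) d) →
        HasAlphaDensity β (Set.range φ) 0) :=
  stmt2_general α β h0 hαβ φ hφ
end

section
/- Let α ∈ (0,1] and let φ, ψ : ℕ₊ → ℕ₊ be strictly increasing functions with δ_α(C_φ) = 0 and δ_α(C_ψ) = 0. Then the set { φ(ψ(n+1)) / φ(ψ(n)) : n ∈ ℕ₊ } is bounded. -/
open Filter Topology

theorem PNat.cofinite_eq_atTop : (cofinite : Filter ℕ+) = atTop := by
  refine le_antisymm ?_ atTop_le_cofinite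
  refine atTop_basis.ge_iff.2 fun N _ => ?_
  simpa only [mem_cofinite, Set.compl_Ici] using Set.finite_Iio N

theorem PNat.tendsto_add_one_atTop : Tendsto (fun n : ℕ+ => n + 1) atTop atTop :=
  tendsto_atTop_atTop_of_monotone (fun _ _ h => add_le_add_left h 1)
    fun n => ⟨n, (PNat.lt_add_right n 1).le⟩

theorem StrictMono.tendsto_atTop_atTop {α : Type*} [LinearOrder α] [WellFoundedLT α]
    {φ : α → α} (hφ : StrictMono φ) : Tendsto φ atTop atTop :=
  tendsto_atTop_atTop_of_monotone hφ.monotone fun n => ⟨n, hφ.le_apply⟩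

theorem HasAlphaDensity.zero_mono {α β : ℝ} {A : Set ℕ+} (hαβ : α ≤ β)
    (hA : HasAlphaDensity α A 0) : HasAlphaDensity β A 0 := by
  refine tendsto_of_tendsto_of_tendsto_of_le_of_le tendsto_const_nhds hA
    (fun n => by positivity) fun n => ?_
  have hn : (1 : ℝ) ≤ n := Nat.one_le_cast.mpr n.pos
  exact div_le_div_of_nonneg_left (Nat.cast_nonneg _) (by positivity)
    (Real.rpow_le_rpow_of_exponent_le hn hαβ)

theorem PNat.ncard_Iic (n : ℕ+) : (Set.Iic n).ncard = n := by
  rw [← Set.Icc_bot, show (⊥ : ℕ+) = 1 from rfl, ← Finset.coe_Icc, Set.ncard_coe_finset,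
    PNat.card_Icc]
  simp

theorem StrictMono.ncard_compl_range_inter_Iic {φ : ℕ+ → ℕ+} (hφ : StrictMono φ) (n : ℕ+) :
    ((Set.range φ)ᶜ ∩ Set.Iic (φ n)).ncard = (φ n : ℕ) - n := by
  have hrange : Set.range φ ∩ Set.Iic (φ n) = φ '' Set.Iic n := by
    ext x
    constructor
    · rintro ⟨⟨k, rfl⟩, hk⟩
      exact ⟨k, hφ.le_iff_le.mp hk, rfl⟩
    · rintro ⟨k, hk, rfl⟩
      exact ⟨⟨k, rfl⟩, hφ.monotone hk⟩
  rw [Set.inter_comm, ← Set.sdiff_eq, ← Set.sdiff_inter_self_eq_sdiff,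
    Set.ncard_sdiff Set.inter_subset_right, hrange, Set.ncard_image_of_injective _ hφ.injective,
    PNat.ncard_Iic, PNat.ncard_Iic]

theorem StrictMono.tendsto_div_self_of_hasAlphaDensity_one {φ : ℕ+ → ℕ+} (hφ : StrictMono φ)
    (hd : HasAlphaDensity 1 (Set.range φ)ᶜ 0) :
    Tendsto (fun n : ℕ+ => (φ n : ℝ) / n) atTop (𝓝 1) := by
  have hgaps : Tendsto (fun n : ℕ+ => 1 - (n : ℝ) / φ n) atTop (𝓝 0) := by
    refine (hd.comp hφ.tendsto_atTop_atTop).congr fun n => ?_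
    simp only [Function.comp_apply, hφ.ncard_compl_range_inter_Iic, Real.rpow_one,
      Nat.cast_sub (PNat.coe_le_coe _ _ |>.mpr hφ.le_apply)]
    field_simp
  have hinv : Tendsto (fun n : ℕ+ => (n : ℝ) / φ n) atTop (𝓝 1) := by
    simpa using (tendsto_const_nhds (x := (1 : ℝ))).sub hgaps
  simpa only [inv_div, inv_one] using hinv.inv₀ one_ne_zero

theorem tendsto_apply_add_one_div_apply_of_tendsto_div_self {u : ℕ+ → ℝ}
    (hu : Tendsto (fun n => u n / n) atTop (𝓝 1)) :
    Tendsto (fun n => u (n + 1) / u n) atTop (𝓝 1) := by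
  have hshift : Tendsto (fun n : ℕ+ => u (n + 1) / ((n : ℝ) + 1)) atTop (𝓝 1) := by
    simpa only [Function.comp_def, PNat.add_coe, PNat.one_coe, Nat.cast_add, Nat.cast_one]
      using hu.comp PNat.tendsto_add_one_atTop
  have hstep : Tendsto (fun n : ℕ+ => (n : ℝ) / ((n : ℝ) + 1)) atTop (𝓝 1) :=
    (tendsto_natCast_div_add_atTop (1 : ℝ)).comp tendsto_PNat_val_atTop_atTop
  have hlim := (hshift.div hu one_ne_zero).div hstep one_ne_zero
  rw [div_one, div_one] at hlim
  refine hlim.congr fun n => ?_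
  have hn : (n : ℝ) ≠ 0 := by positivity
  simp only [Pi.div_apply]
  field_simp

theorem stmt4_general (α : ℝ) (h1 : α ≤ 1)
    (φ ψ : ℕ+ → ℕ+) (hφ : StrictMono φ) (hψ : StrictMono ψ)
    (hφd : HasAlphaDensity α (Set.range φ)ᶜ 0)
    (hψd : HasAlphaDensity α (Set.range ψ)ᶜ 0) :
    ∃ M : ℝ, ∀ n : ℕ+, (φ (ψ (n + 1)) : ℝ) / (φ (ψ n) : ℝ) ≤ M := by
  have hφ1 := hφ.tendsto_div_self_of_hasAlphaDensity_one (hφd.zero_mono h1)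
  have hψ1 := hψ.tendsto_div_self_of_hasAlphaDensity_one (hψd.zero_mono h1)
  have hφψ : Tendsto (fun n : ℕ+ => (φ (ψ n) : ℝ) / n) atTop (𝓝 1) := by
    have hlim := (hφ1.comp hψ.tendsto_atTop_atTop).mul hψ1
    rw [mul_one] at hlim
    exact hlim.congr fun n => div_mul_div_cancel₀ (by positivity)
  have hratio := tendsto_apply_add_one_div_apply_of_tendsto_div_self hφψ
  rw [← PNat.cofinite_eq_atTop] at hratio
  obtain ⟨M, hM⟩ := hratio.bddAbove_range_of_cofinite
  exact ⟨M, fun n => hM ⟨n, rfl⟩⟩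

/-- let `α ∈ (0,1]` and let `φ, ψ : ℕ₊ → ℕ₊` be strictly increasing
with `δ_α(C_φ) = 0` and `δ_α(C_ψ) = 0` (where `C_φ = ℕ₊ \ range φ`).  Then the set
`{ φ(ψ(n+1)) / φ(ψ(n)) : n ∈ ℕ₊ }` is bounded. -/
theorem stmt4 (α : ℝ) (h0 : 0 < α) (h1 : α ≤ 1)
    (φ ψ : ℕ+ → ℕ+) (hφ : StrictMono φ) (hψ : StrictMono ψ)
    (hφd : HasAlphaDensity α (Set.range φ)ᶜ 0)
    (hψd : HasAlphaDensity α (Set.range ψ)ᶜ 0) :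
    ∃ M : ℝ, ∀ n : ℕ+, (φ (ψ (n + 1)) : ℝ) / (φ (ψ n) : ℝ) ≤ M :=
  stmt4_general α h1 φ ψ hφ hψ hφd hψd
end

section
/- For any α ∈ (0,1], the set D*_α = {φ : ℕ₊ → ℕ₊ strictly increasing with δ_α(ℕ₊ ∖ range φ) = 0} is closed under composition: if φ, ψ ∈ D*_α, then φ ∘ ψ ∈ D*_α, i.e., δ_α(ℕ₊ ∖ range(φ ∘ ψ)) = 0. -/
/-! A point `m` missed by `φ ∘ ψ` is either missed by `φ`, or is `φ k` with `k` missed by `ψ`.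
Since `k ≤ φ k` and `φ` is injective, gaps of the second kind up to `n` are no more numerous
than the gaps of `ψ` up to `n`, so the gaps of `φ ∘ ψ` up to `n` number at most those of `φ`
plus those of `ψ`. -/

open Set

theorem Set.compl_range_comp_subset {ι β γ : Type*} (φ : β → γ) (ψ : ι → β) :
    (range (φ ∘ ψ))ᶜ ⊆ (range φ)ᶜ ∪ φ '' (range ψ)ᶜ := by
  intro m hm
  by_cases hmφ : m ∈ range φ
  · obtain ⟨k, rfl⟩ := hmφ
    exact Or.inr ⟨k, fun ⟨i, hi⟩ => hm ⟨i, by simp [hi]⟩, rfl⟩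
  · exact Or.inl hmφ

theorem Set.ncard_image_inter_Iic_le {α : Type*} [Preorder α] [LocallyFiniteOrderBot α]
    {f : α → α} (hinj : f.Injective) (hle : ∀ k, k ≤ f k) (S : Set α) (n : α) :
    (f '' S ∩ Iic n).ncard ≤ (S ∩ Iic n).ncard := by
  have hsub : f '' S ∩ Iic n ⊆ f '' (S ∩ Iic n) := by
    rintro _ ⟨⟨k, hk, rfl⟩, hkn⟩
    exact ⟨k, ⟨hk, (hle k).trans hkn⟩, rfl⟩
  calc (f '' S ∩ Iic n).ncard
      ≤ (f '' (S ∩ Iic n)).ncard :=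
        ncard_le_ncard hsub (((finite_Iic n).inter_of_right S).image f)
    _ = (S ∩ Iic n).ncard := ncard_image_of_injective _ hinj

namespace HasAlphaDensity

variable {α : ℝ} {A B : Set ℕ+}

theorem zero_of_ncard_le (h : ∀ n, (A ∩ Iic n).ncard ≤ (B ∩ Iic n).ncard)
    (hB : HasAlphaDensity α B 0) : HasAlphaDensity α A 0 :=
  tendsto_of_tendsto_of_tendsto_of_le_of_le tendsto_const_nhds hB (fun n => by positivity)
    fun n => div_le_div_of_nonneg_right (Nat.cast_le.mpr (h n)) (by positivity)

theorem mono (hAB : A ⊆ B) (hB : HasAlphaDensity α B 0) : HasAlphaDensity α A 0 :=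
  zero_of_ncard_le (fun n =>
    ncard_le_ncard (inter_subset_inter_left _ hAB) ((finite_Iic n).inter_of_right B)) hB

theorem union (hA : HasAlphaDensity α A 0) (hB : HasAlphaDensity α B 0) :
    HasAlphaDensity α (A ∪ B) 0 := by
  have hsum := hA.add hB
  rw [add_zero] at hsum
  refine tendsto_of_tendsto_of_tendsto_of_le_of_le tendsto_const_nhds hsum
    (fun n => by positivity) fun n => ?_
  rw [← add_div, union_inter_distrib_right]
  rw [← Nat.cast_add]
  gcongr
  exact ncard_union_le _ _

theorem image {f : ℕ+ → ℕ+} (hf : StrictMono f) (hA : HasAlphaDensity α A 0) :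
    HasAlphaDensity α (f '' A) 0 :=
  zero_of_ncard_le (ncard_image_inter_Iic_le hf.injective (fun _ => hf.le_apply) A) hA

end HasAlphaDensity

theorem stmt5_general (α : ℝ)
    (φ ψ : ℕ+ → ℕ+) (hφ : StrictMono φ)
    (hφd : HasAlphaDensity α (Set.range φ)ᶜ 0)
    (hψd : HasAlphaDensity α (Set.range ψ)ᶜ 0) :
    HasAlphaDensity α (Set.range (φ ∘ ψ))ᶜ 0 :=
  (hφd.union (hψd.image hφ)).mono (compl_range_comp_subset φ ψ)

/-- for any `α ∈ (0,1]`, the class `D*_α` of strictly increasing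
`φ : ℕ₊ → ℕ₊` with `δ_α(ℕ₊ \ range φ) = 0` is closed under composition. -/
theorem stmt5 (α : ℝ) (h0 : 0 < α) (h1 : α ≤ 1)
    (φ ψ : ℕ+ → ℕ+) (hφ : StrictMono φ) (hψ : StrictMono ψ)
    (hφd : HasAlphaDensity α (Set.range φ)ᶜ 0)
    (hψd : HasAlphaDensity α (Set.range ψ)ᶜ 0) :
    HasAlphaDensity α (Set.range (φ ∘ ψ))ᶜ 0 :=
  stmt5_general α φ ψ hφ hφd hψd
end

section
/- No infinite Hausdorff countably compact space is discretely selective. That is, if X is an infinite Hausdorff topological space in which every countable open cover has a finite subcover, then there exists a sequence ⟨U_n : n ∈ ℕ⟩ of nonempty open subsets of X such that for every choice of points x_n ∈ U_n, the set {x_n : n ∈ ℕ} is not both closed and relatively discrete. -/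
private lemma stmt8_step {X : Type*} [TopologicalSpace X] [T2Space X] {V : Set X}
    (hV : IsOpen V) (hVi : V.Infinite) :
    ∃ U W : Set X, IsOpen U ∧ U.Nonempty ∧ IsOpen W ∧ W.Infinite ∧
      U ⊆ V ∧ W ⊆ V ∧ Disjoint U W := by
  obtain ⟨x, hx, y, hy, hxy⟩ := hVi.nontrivial
  obtain ⟨A, B, hA, hB, hxA, hyB, hAB⟩ := t2_separation hxy
  by_cases h : (V ∩ A).Infinite
  · exact ⟨V ∩ B, V ∩ A, hV.inter hB, ⟨y, hy, hyB⟩, hV.inter hA, h,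
      Set.inter_subset_left, Set.inter_subset_left,
      (hAB.symm.mono Set.inter_subset_right Set.inter_subset_right)⟩
  · rw [Set.not_infinite] at h
    exact ⟨V ∩ A, V \ (V ∩ A), hV.inter hA, ⟨x, hx, hxA⟩, hV.sdiff h.isClosed,
      hVi.diff h, Set.inter_subset_left, Set.diff_subset, Set.disjoint_sdiff_right⟩

private lemma stmt8_cellular {X : Type*} [TopologicalSpace X] [T2Space X] [Infinite X] :
    ∃ U : ℕ → Set X, (∀ n, IsOpen (U n)) ∧ (∀ n, (U n).Nonempty) ∧
      Pairwise (Function.onFun Disjoint U) := by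
  have key : ∀ W : {W : Set X // IsOpen W ∧ W.Infinite},
      ∃ p : (Set X) × {W : Set X // IsOpen W ∧ W.Infinite},
        IsOpen p.1 ∧ p.1.Nonempty ∧ p.1 ⊆ W.1 ∧ p.2.1 ⊆ W.1 ∧ Disjoint p.1 p.2.1 := by
    rintro ⟨W, hW, hWi⟩
    obtain ⟨U, V, hU, hUne, hV, hVi, hUW, hVW, hUV⟩ := stmt8_step hW hWi
    exact ⟨(U, ⟨V, hV, hVi⟩), hU, hUne, hUW, hVW, hUV⟩
  choose next h1 h2 h3 h4 h5 using key
  let seq : ℕ → {W : Set X // IsOpen W ∧ W.Infinite} :=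
    fun n => Nat.rec ⟨Set.univ, isOpen_univ, Set.infinite_univ⟩ (fun _ W => (next W).2) n
  have hseq : ∀ n, seq (n + 1) = (next (seq n)).2 := fun n => rfl
  have hmono : ∀ n m, n ≤ m → (seq m).1 ⊆ (seq n).1 := by
    intro n m h
    induction h with
    | refl => exact subset_rfl
    | step h ih => exact (h4 _).trans ih
  refine ⟨fun n => (next (seq n)).1, fun n => h1 _, fun n => h2 _, ?_⟩
  have main : ∀ n m, n < m → Disjoint (next (seq n)).1 (next (seq m)).1 := by
    intro n m h
    exact (h5 (seq n)).mono_right (((h3 (seq m)).trans (hmono (n + 1) m h)).trans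
      (by rw [hseq]))
  intro n m h
  rcases lt_or_gt_of_ne h with h | h
  · exact main n m h
  · exact (main m n h).symm

/-- no infinite Hausdorff countably compact space is discretely
selective: if `X` is infinite, Hausdorff, and every countable open cover of `X`
has a finite subcover, then there is a sequence `⟨U_n⟩` of nonempty open sets
such that for every choice of points `x_n ∈ U_n`, the set `{x_n : n ∈ ℕ}` is
not both closed and relatively discrete. -/
theorem stmt8 {X : Type*} [TopologicalSpace X] [T2Space X] [Infinite X]
    (hcc : ∀ C : ℕ → Set X, (∀ n, IsOpen (C n)) → (⋃ n, C n) = Set.univ →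
      ∃ F : Finset ℕ, (⋃ n ∈ F, C n) = Set.univ) :
    ∃ U : ℕ → Set X, (∀ n, IsOpen (U n)) ∧ (∀ n, (U n).Nonempty) ∧
      ∀ x : ℕ → X, (∀ n, x n ∈ U n) →
        ¬ (IsClosed (Set.range x) ∧
            ∀ y ∈ Set.range x, ∃ V : Set X, IsOpen V ∧ V ∩ Set.range x = {y}) := by
  obtain ⟨U, hUo, hUne, hUd⟩ := stmt8_cellular (X := X)
  refine ⟨U, hUo, hUne, ?_⟩
  rintro x hx ⟨hcl, hdisc⟩
  have hinj : Function.Injective x := by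
    intro n m h
    by_contra hne
    exact (hUd hne).ne_of_mem (hx n) (h ▸ hx m) rfl
  choose V hVo hVint using fun n => hdisc (x n) ⟨n, rfl⟩
  set C : ℕ → Set X := fun n => match n with
    | 0 => (Set.range x)ᶜ
    | n + 1 => V n with hC
  have hCo : ∀ n, IsOpen (C n) := by
    intro n; match n with
    | 0 => exact hcl.isOpen_compl
    | n + 1 => exact hVo n
  have hCu : (⋃ n, C n) = Set.univ := by
    ext z
    simp only [Set.mem_iUnion, Set.mem_univ, iff_true]
    by_cases hz : z ∈ Set.range x
    · obtain ⟨n, rfl⟩ := hz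
      refine ⟨n + 1, ?_⟩
      have : x n ∈ V n ∩ Set.range x := (hVint n).symm ▸ rfl
      exact this.1
    · exact ⟨0, hz⟩
  obtain ⟨F, hF⟩ := hcc C hCo hCu
  set N := F.sup id with hN
  have hxN : x N ∈ ⋃ n ∈ F, C n := hF ▸ Set.mem_univ _
  simp only [Set.mem_iUnion] at hxN
  obtain ⟨n, hnF, hxn⟩ := hxN
  match n with
  | 0 => exact hxn ⟨N, rfl⟩
  | m + 1 =>
    have : x N ∈ V m ∩ Set.range x := ⟨hxn, ⟨N, rfl⟩⟩
    rw [hVint m] at this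
    have hNm : N = m := hinj this
    have : m + 1 ≤ N := Finset.le_sup (f := id) hnF
    omega
end

section
/- No infinite Hausdorff sequentially compact space is discretely selective. That is, if X is an infinite Hausdorff topological space in which every sequence has a convergent subsequence, then X is not discretely selective. -/
/-- A space is discretely selective if for every sequence of nonempty open sets
one can select points whose set of values is closed and relatively discrete. -/
def DiscretelySelective (X : Type*) [TopologicalSpace X] : Prop :=
  ∀ U : ℕ → Set X, (∀ n, IsOpen (U n)) → (∀ n, (U n).Nonempty) →
    ∃ x : ℕ → X, (∀ n, x n ∈ U n) ∧ IsClosed (Set.range x) ∧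
      ∀ y ∈ Set.range x, ∃ V : Set X, IsOpen V ∧ V ∩ Set.range x = {y}

/-- From a sequence converging to `p` with all terms different from `p`, extract a
countable pairwise disjoint family of nonempty open sets. -/
lemma aux_disjoint_opens {X : Type*} [TopologicalSpace X] [T2Space X] {p : X} {t : ℕ → X}
    (ht : ∀ n, t n ≠ p) (htend : Filter.Tendsto t Filter.atTop (nhds p)) :
    ∃ A : ℕ → Set X, (∀ n, IsOpen (A n)) ∧ (∀ n, (A n).Nonempty) ∧
      ∀ n m, n ≠ m → Disjoint (A n) (A m) := by
  have key : ∀ B : Set X, IsOpen B → p ∈ B → ∃ A B' : Set X, IsOpen A ∧ IsOpen B' ∧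
      A.Nonempty ∧ p ∈ B' ∧ A ⊆ B ∧ B' ⊆ B ∧ Disjoint A B' := by
    intro B hB hpB
    obtain ⟨k, hk⟩ := (htend.eventually (hB.mem_nhds hpB)).exists
    obtain ⟨U, V, hU, hV, htU, hpV, hUV⟩ := t2_separation (ht k)
    exact ⟨U ∩ B, V ∩ B, hU.inter hB, hV.inter hB, ⟨t k, htU, hk⟩, ⟨hpV, hpB⟩,
      Set.inter_subset_right, Set.inter_subset_right,
      hUV.mono Set.inter_subset_left Set.inter_subset_left⟩
  choose fA fB h1 h2 h3 h4 h5 h6 h7 using key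
  let g : ℕ → {B : Set X // IsOpen B ∧ p ∈ B} := fun n =>
    Nat.rec ⟨Set.univ, isOpen_univ, Set.mem_univ p⟩
      (fun _ prev => ⟨fB prev.1 prev.2.1 prev.2.2, h2 _ _ _, h4 _ _ _⟩) n
  refine ⟨fun n => fA (g n).1 (g n).2.1 (g n).2.2, fun n => h1 _ _ _, fun n => h3 _ _ _, ?_⟩
  have hstep : ∀ n, (g (n+1)).1 ⊆ (g n).1 := fun n => h6 _ _ _
  have hmono : ∀ n k, (g (n+k)).1 ⊆ (g n).1 := by
    intro n k
    induction k with
    | zero => exact subset_rfl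
    | succ k ih => exact (hstep (n+k)).trans ih
  have hle : ∀ n m, n < m → (g m).1 ⊆ (g (n+1)).1 := by
    intro n m hnm
    have : m = (n+1) + (m - (n+1)) := by omega
    rw [this]; exact hmono _ _
  have hkey : ∀ n m, n < m →
      Disjoint (fA (g n).1 (g n).2.1 (g n).2.2) (fA (g m).1 (g m).2.1 (g m).2.2) := by
    intro n m hnm
    have hd : Disjoint (fA (g n).1 (g n).2.1 (g n).2.2) (g (n+1)).1 := h7 _ _ _
    exact hd.mono_right (((h5 (g m).1 (g m).2.1 (g m).2.2)).trans (hle n m hnm))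
  intro n m hnm
  rcases lt_or_gt_of_ne hnm with h | h
  · exact hkey n m h
  · exact (hkey m n h).symm

/-- no infinite Hausdorff sequentially compact space (every
sequence has a convergent subsequence) is discretely selective. -/
theorem stmt9 {X : Type*} [TopologicalSpace X] [T2Space X] [Infinite X]
    (hsc : ∀ s : ℕ → X, ∃ (x : X) (φ : ℕ → ℕ), StrictMono φ ∧
      Filter.Tendsto (s ∘ φ) Filter.atTop (nhds x)) :
    ¬ DiscretelySelective X := by
  intro hDS
  set s : ℕ → X := fun n => (Infinite.natEmbedding X) n with hs
  have hsinj : Function.Injective s := fun a b h => (Infinite.natEmbedding X).injective h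
  obtain ⟨p, φ, hφ, htend⟩ := hsc s
  have htinj : Function.Injective (s ∘ φ) := hsinj.comp hφ.injective
  obtain ⟨t', ht'p, ht'tend⟩ : ∃ t' : ℕ → X, (∀ n, t' n ≠ p) ∧
      Filter.Tendsto t' Filter.atTop (nhds p) := by
    by_cases h : ∃ n0, (s ∘ φ) n0 = p
    · obtain ⟨n0, hn0⟩ := h
      refine ⟨fun k => (s ∘ φ) (k + n0 + 1), ?_, ?_⟩
      · intro k hk
        have := htinj (hk.trans hn0.symm)
        omega
      · exact htend.comp (Filter.tendsto_add_atTop_nat (n0+1))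
    · exact ⟨s ∘ φ, fun n hn => h ⟨n, hn⟩, htend⟩
  obtain ⟨A, hAopen, hAne, hAdisj⟩ := aux_disjoint_opens ht'p ht'tend
  obtain ⟨x, hxmem, hxclosed, hxdisc⟩ := hDS A hAopen hAne
  have hxinj : Function.Injective x := by
    intro n m h
    by_contra hne
    exact (hAdisj n m hne).ne_of_mem (hxmem n) (hxmem m) h
  obtain ⟨q, ψ, hψ, hqt⟩ := hsc x
  have hq : q ∈ Set.range x := by
    have : q ∈ closure (Set.range x) :=
      mem_closure_of_tendsto hqt (Filter.Eventually.of_forall fun n => Set.mem_range_self _)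
    rwa [hxclosed.closure_eq] at this
  obtain ⟨V, hVopen, hVcap⟩ := hxdisc q hq
  have hqV : q ∈ V := by
    have : q ∈ V ∩ Set.range x := by rw [hVcap]; exact rfl
    exact this.1
  have hev : ∀ᶠ n in Filter.atTop, (x ∘ ψ) n ∈ V := hqt.eventually (hVopen.mem_nhds hqV)
  obtain ⟨N, hN⟩ := hev.exists_forall_of_atTop
  have heq : ∀ n, N ≤ n → x (ψ n) = q := by
    intro n hn
    have : x (ψ n) ∈ V ∩ Set.range x := ⟨hN n hn, Set.mem_range_self _⟩
    rw [hVcap] at this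
    exact this
  have h1 : x (ψ N) = x (ψ (N+1)) := by rw [heq N le_rfl, heq (N+1) (by omega)]
  exact (hψ (Nat.lt_succ_self N)).ne (hxinj h1)
end

section
/- Let X be a topological space and x ∈ X a point such that {x} is closed in X, x is not an isolated point of X, and there is a countable local π-base at x. Then X is not discretely selective. In particular, no first-countable T1 space without isolated points is discretely selective. -/
open Filter Topology

theorem aux10 {X : Type*} [TopologicalSpace X] (x : X)
    (hxc : IsClosed ({x} : Set X)) (hxni : ¬ IsOpen ({x} : Set X))
    (B : ℕ → Set X) (hBo : ∀ n, IsOpen (B n)) (hBne : ∀ n, (B n).Nonempty)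
    (hπ : ∀ U : Set X, IsOpen U → x ∈ U → ∃ n, B n ⊆ U) :
    ¬ DiscretelySelective X := by
  intro hDS
  obtain ⟨f, hf, hcl, -⟩ := hDS (fun n => B n \ {x})
    (fun n => (hBo n).sdiff hxc)
    (fun n => by
      by_contra h
      rw [Set.not_nonempty_iff_eq_empty, Set.diff_eq_empty] at h
      have : B n = {x} := h.antisymm (Set.singleton_subset_iff.2 (by
        obtain ⟨a, ha⟩ := hBne n
        rwa [← Set.eq_of_mem_singleton (h ha)]))
      exact hxni (this ▸ hBo n))
  have hx : x ∈ (Set.range f)ᶜ := by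
    rintro ⟨n, hn⟩
    exact (hf n).2 hn
  obtain ⟨n, hn⟩ := hπ _ hcl.isOpen_compl hx
  exact hn (hf n).1 ⟨n, rfl⟩

/-- if `x ∈ X` is such that `{x}` is closed, `x` is not isolated,
and there is a countable local π-base at `x` (a sequence of nonempty open sets
such that every open neighborhood of `x` contains one of them), then `X` is not
discretely selective.  In particular, no nonempty first-countable T1 space
without isolated points is discretely selective. -/
theorem stmt10 {X : Type*} [TopologicalSpace X] (x : X)
    (hxc : IsClosed ({x} : Set X)) (hxni : ¬ IsOpen ({x} : Set X))
    (B : ℕ → Set X) (hBo : ∀ n, IsOpen (B n)) (hBne : ∀ n, (B n).Nonempty)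
    (hπ : ∀ U : Set X, IsOpen U → x ∈ U → ∃ n, B n ⊆ U) :
    ¬ DiscretelySelective X ∧
    ∀ (Y : Type) [TopologicalSpace Y] [T1Space Y]
        [FirstCountableTopology Y], Nonempty Y →
      (∀ y : Y, ¬ IsOpen ({y} : Set Y)) → ¬ DiscretelySelective Y := by
  refine ⟨aux10 x hxc hxni B hBo hBne hπ, ?_⟩
  intro Y _ _ _ ⟨y⟩ hni
  obtain ⟨s, hs⟩ := (𝓝 y).exists_antitone_basis
  refine aux10 y (isClosed_singleton) (hni y) (fun n => interior (s n))
    (fun n => isOpen_interior)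
    (fun n => ⟨y, mem_interior_iff_mem_nhds.2 (hs.mem n)⟩) ?_
  intro U hU hyU
  obtain ⟨n, hn⟩ := hs.mem_iff.1 (hU.mem_nhds hyU)
  exact ⟨n, interior_subset.trans hn⟩
end

section
/- Let X and Y be topological spaces and ⟨x_n : n ∈ ℕ⟩, ⟨y_n : n ∈ ℕ⟩ be sequences in X and Y respectively such that {x_n : n ∈ ℕ} is closed and relatively discrete in X and {y_n : n ∈ ℕ} is closed and relatively discrete in Y. Then {(x_n, y_n) : n ∈ ℕ} is closed and relatively discrete in the product X × Y. Consequently, if X and Y are both discretely selective, then X × Y is discretely selective. -/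
theorem pair_cd {X Y : Type*} [TopologicalSpace X] [TopologicalSpace Y]
    (x : ℕ → X) (y : ℕ → Y)
    (hxc : IsClosed (Set.range x))
    (hxd : ∀ a ∈ Set.range x, ∃ V : Set X, IsOpen V ∧ V ∩ Set.range x = {a})
    (hyc : IsClosed (Set.range y))
    (hyd : ∀ b ∈ Set.range y, ∃ W : Set Y, IsOpen W ∧ W ∩ Set.range y = {b}) :
    IsClosed (Set.range fun n => (x n, y n)) ∧
      ∀ p ∈ Set.range (fun n => (x n, y n)), ∃ V : Set (X × Y), IsOpen V ∧
        V ∩ Set.range (fun n => (x n, y n)) = {p} := by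
  set S := Set.range fun n => (x n, y n) with hS
  have hsub : ∀ p ∈ S, p.1 ∈ Set.range x ∧ p.2 ∈ Set.range y := by
    rintro p ⟨n, rfl⟩; exact ⟨⟨n, rfl⟩, ⟨n, rfl⟩⟩
  constructor
  · refine isClosed_of_closure_subset ?_
    intro p hp
    by_cases h1 : p.1 ∈ Set.range x
    · by_cases h2 : p.2 ∈ Set.range y
      · obtain ⟨V, hV, hVx⟩ := hxd p.1 h1
        obtain ⟨W, hW, hWy⟩ := hyd p.2 h2
        have hpV : p.1 ∈ V := by
          have : p.1 ∈ V ∩ Set.range x := by rw [hVx]; rfl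
          exact this.1
        have hpW : p.2 ∈ W := by
          have : p.2 ∈ W ∩ Set.range y := by rw [hWy]; rfl
          exact this.1
        have := (mem_closure_iff.mp hp) (V ×ˢ W) (hV.prod hW) ⟨hpV, hpW⟩
        obtain ⟨q, ⟨hqV, hqW⟩, n, rfl⟩ := this
        have hx : x n = p.1 := by
          have : x n ∈ V ∩ Set.range x := ⟨hqV, ⟨n, rfl⟩⟩
          rwa [hVx] at this
        have hy : y n = p.2 := by
          have : y n ∈ W ∩ Set.range y := ⟨hqW, ⟨n, rfl⟩⟩
          rwa [hWy] at this
        exact ⟨n, Prod.ext hx hy⟩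
      · exfalso
        have := (mem_closure_iff.mp hp) (Set.univ ×ˢ (Set.range y)ᶜ)
          (isOpen_univ.prod hyc.isOpen_compl) ⟨trivial, h2⟩
        obtain ⟨q, ⟨-, hq2⟩, n, rfl⟩ := this
        exact hq2 ⟨n, rfl⟩
    · exfalso
      have := (mem_closure_iff.mp hp) ((Set.range x)ᶜ ×ˢ Set.univ)
        (hxc.isOpen_compl.prod isOpen_univ) ⟨h1, trivial⟩
      obtain ⟨q, ⟨hq1, -⟩, n, rfl⟩ := this
      exact hq1 ⟨n, rfl⟩
  · rintro p ⟨m, rfl⟩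
    obtain ⟨V, hV, hVx⟩ := hxd (x m) ⟨m, rfl⟩
    obtain ⟨W, hW, hWy⟩ := hyd (y m) ⟨m, rfl⟩
    refine ⟨V ×ˢ W, hV.prod hW, ?_⟩
    ext q
    constructor
    · rintro ⟨⟨hqV, hqW⟩, n, rfl⟩
      have hx : x n = x m := by
        have : x n ∈ V ∩ Set.range x := ⟨hqV, ⟨n, rfl⟩⟩
        rwa [hVx] at this
      have hy : y n = y m := by
        have : y n ∈ W ∩ Set.range y := ⟨hqW, ⟨n, rfl⟩⟩
        rwa [hWy] at this
      simp [hx, hy]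
    · rintro rfl
      refine ⟨⟨?_, ?_⟩, ⟨m, rfl⟩⟩
      · have : x m ∈ V ∩ Set.range x := by rw [hVx]; rfl
        exact this.1
      · have : y m ∈ W ∩ Set.range y := by rw [hWy]; rfl
        exact this.1

/-- if `{x_n}` is closed and relatively discrete in `X` and
`{y_n}` is closed and relatively discrete in `Y`, then `{(x_n, y_n)}` is closed
and relatively discrete in `X × Y`.  Consequently, if `X` and `Y` are both
discretely selective, then so is `X × Y`. -/
theorem stmt11 {X Y : Type*} [TopologicalSpace X] [TopologicalSpace Y] :
    (∀ (x : ℕ → X) (y : ℕ → Y),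
      IsClosed (Set.range x) →
      (∀ a ∈ Set.range x, ∃ V : Set X, IsOpen V ∧ V ∩ Set.range x = {a}) →
      IsClosed (Set.range y) →
      (∀ b ∈ Set.range y, ∃ W : Set Y, IsOpen W ∧ W ∩ Set.range y = {b}) →
      IsClosed (Set.range fun n => (x n, y n)) ∧
        ∀ p ∈ Set.range (fun n => (x n, y n)), ∃ V : Set (X × Y), IsOpen V ∧
          V ∩ Set.range (fun n => (x n, y n)) = {p}) ∧
    (DiscretelySelective X → DiscretelySelective Y →
      DiscretelySelective (X × Y)) := by
  refine ⟨fun x y hxc hxd hyc hyd => pair_cd x y hxc hxd hyc hyd, ?_⟩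
  intro hX hY U hUo hUne
  have hbase : ∀ n, ∃ (A : Set X) (B : Set Y),
      IsOpen A ∧ IsOpen B ∧ A.Nonempty ∧ B.Nonempty ∧ A ×ˢ B ⊆ U n := by
    intro n
    obtain ⟨p, hp⟩ := hUne n
    obtain ⟨A, B, hA, hB, hpA, hpB, hsub⟩ := (isOpen_prod_iff.mp (hUo n)) p.1 p.2 hp
    exact ⟨A, B, hA, hB, ⟨p.1, hpA⟩, ⟨p.2, hpB⟩, hsub⟩
  choose A B hA hB hAne hBne hsub using hbase
  obtain ⟨x, hxU, hxc, hxd⟩ := hX A hA hAne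
  obtain ⟨y, hyU, hyc, hyd⟩ := hY B hB hBne
  obtain ⟨hc, hd⟩ := pair_cd x y hxc hxd hyc hyd
  exact ⟨fun n => (x n, y n), fun n => hsub n ⟨hxU n, hyU n⟩, hc, hd⟩
end

section
/- Let X be a T1 topological space in which every nonempty open set is infinite. Then: (1) Player Two has a winning strategy in the closed discrete selection game G₁(𝒯_X, CD_X) if and only if Player Two has a winning strategy in the injective game G⃗₁(𝒯_X, CD*_X); and (2) Player One has a winning strategy in G₁(𝒯_X, CD_X) if and only if Player One has a winning strategy in G⃗₁(𝒯_X, CD*_X). -/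
variable (X : Type*) [TopologicalSpace X]

/-- A set is relatively discrete if each of its points has an open neighborhood
meeting the set only in that point. -/
def RelDiscrete (A : Set X) : Prop :=
  ∀ a ∈ A, ∃ V : Set X, IsOpen V ∧ V ∩ A = {a}

/-- A strategy for Player Two maps a history of previously played open sets
together with the current open set to a point; it is valid if it always picks a
point of the current (nonempty open) set. -/
def ValidP2 (τ : List (Set X) → Set X → X) : Prop :=
  ∀ (h : List (Set X)) (U : Set X), IsOpen U → U.Nonempty → τ h U ∈ U

/-- The play of Player Two's strategy `τ` against the sequence `U` of moves of
Player One. -/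
def playP2 (τ : List (Set X) → Set X → X) (U : ℕ → Set X) (n : ℕ) : X :=
  τ (List.ofFn fun i : Fin n => U i) (U n)

/-- Player Two has a winning strategy in the closed discrete selection game
`G₁(𝒯_X, CD_X)`. -/
def P2WinsCD : Prop :=
  ∃ τ : List (Set X) → Set X → X, ValidP2 X τ ∧
    ∀ U : ℕ → Set X, (∀ n, IsOpen (U n)) → (∀ n, (U n).Nonempty) →
      IsClosed (Set.range (playP2 X τ U)) ∧
        RelDiscrete X (Set.range (playP2 X τ U))

/-- Player Two has a winning strategy in the injective game `G⃗₁(𝒯_X, CD*_X)`. -/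
def P2WinsCDstar : Prop :=
  ∃ τ : List (Set X) → Set X → X, ValidP2 X τ ∧
    ∀ U : ℕ → Set X, (∀ n, IsOpen (U n)) → (∀ n, (U n).Nonempty) →
      Function.Injective (playP2 X τ U) ∧
        IsClosed (Set.range (playP2 X τ U)) ∧
          RelDiscrete X (Set.range (playP2 X τ U))

/-- Player One has a winning strategy in the closed discrete selection game
`G₁(𝒯_X, CD_X)`: a function from histories of Player Two's points to nonempty
open sets defeating every play of Player Two. -/
def P1WinsCD : Prop :=
  ∃ σ : List X → Set X, (∀ h, IsOpen (σ h) ∧ (σ h).Nonempty) ∧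
    ∀ x : ℕ → X, (∀ n, x n ∈ σ (List.ofFn fun i : Fin n => x i)) →
      ¬ (IsClosed (Set.range x) ∧ RelDiscrete X (Set.range x))

/-- Player One has a winning strategy in the injective game `G⃗₁(𝒯_X, CD*_X)`. -/
def P1WinsCDstar : Prop :=
  ∃ σ : List X → Set X, (∀ h, IsOpen (σ h) ∧ (σ h).Nonempty) ∧
    ∀ x : ℕ → X, (∀ n, x n ∈ σ (List.ofFn fun i : Fin n => x i)) →
      ¬ (Function.Injective x ∧ IsClosed (Set.range x) ∧
          RelDiscrete X (Set.range x))

/-!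
Removing finitely many points from a nonempty open set of such a space leaves a nonempty open
set. So Player Two makes a winning strategy injective by feeding it `Uₙ` minus the points already
played: the resulting play is a play of the old strategy against these smaller open sets, hence
closed discrete. Dually, Player One forces injectivity by always removing the points already
played from the set his strategy proposes.
-/

variable {X}

theorem IsOpen.sdiff_finite_nonempty [T1Space X]
    (hinf : ∀ U : Set X, IsOpen U → U.Nonempty → U.Infinite) {U s : Set X} (hU : IsOpen U)
    (hne : U.Nonempty) (hs : s.Finite) : IsOpen (U \ s) ∧ (U \ s).Nonempty :=
  ⟨hU.sdiff hs.isClosed, ((hinf U hU hne).sdiff hs).nonempty⟩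

theorem Function.injective_of_notMem_ofFn {α : Type*} {x : ℕ → α}
    (h : ∀ n, x n ∉ List.ofFn fun i : Fin n => x i) : Function.Injective x :=
  .of_lt_imp_ne fun m n hmn hx => h n (List.mem_ofFn.2 ⟨⟨m, hmn⟩, hx⟩)

theorem List.ofFn_succ_eq_append {α : Type*} (f : ℕ → α) (n : ℕ) :
    (List.ofFn fun i : Fin (n + 1) => f i) = (List.ofFn fun i : Fin n => f i) ++ [f n] :=
  List.ofFn_succ_last

section Injectivize

variable {α : Type*} (τ : List (Set α) → Set α → α)

/-- States are pairs `(points played, sets fed to τ)`. -/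
def injectivizeStep (s : List α × List (Set α)) (U : Set α) : List α × List (Set α) :=
  (s.1 ++ [τ s.2 (U \ {y | y ∈ s.1})], s.2 ++ [U \ {y | y ∈ s.1}])

def injectivizeState (h : List (Set α)) : List α × List (Set α) :=
  h.foldl (injectivizeStep τ) ([], [])

def injectivize (h : List (Set α)) (U : Set α) : α :=
  τ (injectivizeState τ h).2 (U \ {y | y ∈ (injectivizeState τ h).1})

def injectivizeSets (U : ℕ → Set α) (n : ℕ) : Set α :=
  U n \ {y | y ∈ List.ofFn fun i : Fin n => playP2 α (injectivize τ) U i}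

theorem injectivizeState_ofFn (U : ℕ → Set α) (n : ℕ) :
    injectivizeState τ (List.ofFn fun i : Fin n => U i) =
      (List.ofFn fun i : Fin n => playP2 α (injectivize τ) U i,
        List.ofFn fun i : Fin n => injectivizeSets τ U i) := by
  induction n with
  | zero => rfl
  | succ n ih =>
    have hplay : playP2 α (injectivize τ) U n =
        τ (List.ofFn fun i : Fin n => injectivizeSets τ U i) (injectivizeSets τ U n) := by
      rw [playP2, injectivize, ih]
      rfl
    rw [injectivizeState, List.ofFn_succ_eq_append, List.foldl_concat, ← injectivizeState, ih,
      injectivizeStep, List.ofFn_succ_eq_append, List.ofFn_succ_eq_append, hplay]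
    rfl

theorem playP2_injectivize (U : ℕ → Set α) :
    playP2 α (injectivize τ) U = playP2 α τ (injectivizeSets τ U) := by
  funext n
  rw [playP2, injectivize, injectivizeState_ofFn]
  rfl

end Injectivize

section

variable [T1Space X]

theorem ValidP2.injectivize (hinf : ∀ U : Set X, IsOpen U → U.Nonempty → U.Infinite)
    {τ : List (Set X) → Set X → X} (hτ : ValidP2 X τ) :
    ValidP2 X (injectivize τ) := fun h _ hU hne =>
  have hV := hU.sdiff_finite_nonempty hinf hne (injectivizeState τ h).1.finite_toSet
  Set.sdiff_subset (hτ _ _ hV.1 hV.2)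

theorem isOpen_injectivizeSets (hinf : ∀ U : Set X, IsOpen U → U.Nonempty → U.Infinite)
    {τ : List (Set X) → Set X → X} {U : ℕ → Set X} (hU : ∀ n, IsOpen (U n))
    (hne : ∀ n, (U n).Nonempty) (n : ℕ) :
    IsOpen (injectivizeSets τ U n) ∧ (injectivizeSets τ U n).Nonempty :=
  (hU n).sdiff_finite_nonempty hinf (hne n) (List.finite_toSet _)

theorem p2WinsCD_iff_p2WinsCDstar
    (hinf : ∀ U : Set X, IsOpen U → U.Nonempty → U.Infinite) :
    P2WinsCD X ↔ P2WinsCDstar X := by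
  refine ⟨fun ⟨τ, hτ, hwin⟩ => ⟨injectivize τ, hτ.injectivize hinf, fun U hU hne => ?_⟩,
    fun ⟨τ, hτ, hwin⟩ => ⟨τ, hτ, fun U hU hne => (hwin U hU hne).2⟩⟩
  have hV := isOpen_injectivizeSets hinf (τ := τ) hU hne
  have hmem n : playP2 X (injectivize τ) U n ∈ injectivizeSets τ U n := by
    rw [playP2_injectivize]
    exact hτ _ _ (hV n).1 (hV n).2
  refine ⟨Function.injective_of_notMem_ofFn fun n => (hmem n).2, ?_⟩
  rw [playP2_injectivize]
  exact hwin _ (fun n => (hV n).1) (fun n => (hV n).2)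

theorem p1WinsCD_iff_p1WinsCDstar
    (hinf : ∀ U : Set X, IsOpen U → U.Nonempty → U.Infinite) :
    P1WinsCD X ↔ P1WinsCDstar X := by
  refine ⟨fun ⟨σ, hσ, hwin⟩ => ⟨σ, hσ, fun x hx hcon => hwin x hx hcon.2⟩,
    fun ⟨σ, hσ, hwin⟩ => ⟨fun h => σ h \ {y | y ∈ h}, fun h => ?_, fun x hx hcon => ?_⟩⟩
  · exact (hσ h).1.sdiff_finite_nonempty hinf (hσ h).2 h.finite_toSet
  · exact hwin x (fun n => (hx n).1)
      ⟨Function.injective_of_notMem_ofFn fun n => (hx n).2, hcon⟩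

end

/-- let `X` be a T1 space in which every nonempty open set is
infinite.  Then Player Two has a winning strategy in `G₁(𝒯_X, CD_X)` iff Player
Two has a winning strategy in `G⃗₁(𝒯_X, CD*_X)`, and Player One has a winning
strategy in `G₁(𝒯_X, CD_X)` iff Player One has one in `G⃗₁(𝒯_X, CD*_X)`. -/
theorem stmt12 [T1Space X]
    (hinf : ∀ U : Set X, IsOpen U → U.Nonempty → U.Infinite) :
    (P2WinsCD X ↔ P2WinsCDstar X) ∧ (P1WinsCD X ↔ P1WinsCDstar X) :=
  ⟨p2WinsCD_iff_p2WinsCDstar hinf, p1WinsCD_iff_p1WinsCDstar hinf⟩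
end

section
/- Let X be a topological space, let 𝒞 be the set of strictly increasing functions ℕ → ℕ with cofinite range, and for s : ℕ → X say s ∈ SDS^𝒞_X if for every φ ∈ 𝒞 and every x ∈ X there exist an open neighborhood U of x and ψ ∈ 𝒞 such that s(φ(ψ(n))) ∉ U for all n ∈ ℕ. Then s ∈ SDS^𝒞_X if and only if s is finite-to-one (for every x ∈ X the set {n : s(n) = x} is finite) and the set {s(n) : n ∈ ℕ} is locally finite in X (every point of X has an open neighborhood containing only finitely many points of {s(n) : n ∈ ℕ}). -/
/-- `𝒞`: the strictly increasing functions `ℕ → ℕ` with cofinite range. -/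
def CofinRange : Set (ℕ → ℕ) :=
  {φ | StrictMono φ ∧ (Set.range φ)ᶜ.Finite}

/-- `s ∈ SDS^𝒞_X`: for every `φ ∈ 𝒞` and every `x ∈ X` there are an open
neighborhood `U` of `x` and `ψ ∈ 𝒞` with `s (φ (ψ n)) ∉ U` for all `n`. -/
def SDSC {X : Type*} [TopologicalSpace X] (s : ℕ → X) : Prop :=
  ∀ φ ∈ CofinRange, ∀ x : X, ∃ U : Set X, IsOpen U ∧ x ∈ U ∧
    ∃ ψ ∈ CofinRange, ∀ n : ℕ, s (φ (ψ n)) ∉ U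

/-- `s ∈ SDS^𝒞_X` iff `s` is finite-to-one and its range is
locally finite (every point of `X` has an open neighborhood containing only
finitely many points of the range of `s`). -/
theorem stmt13 {X : Type*} [TopologicalSpace X] (s : ℕ → X) :
    SDSC s ↔
      ((∀ x : X, {n : ℕ | s n = x}.Finite) ∧
        ∀ x : X, ∃ U : Set X, IsOpen U ∧ x ∈ U ∧ (U ∩ Set.range s).Finite) := by
  constructor
  · intro h
    have hid : (id : ℕ → ℕ) ∈ CofinRange := ⟨strictMono_id, by simp⟩
    have key : ∀ x : X, ∃ U : Set X, IsOpen U ∧ x ∈ U ∧ {m : ℕ | s m ∈ U}.Finite := by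
      intro x
      obtain ⟨U, hU, hxU, ψ, ⟨hmono, hcof⟩, hn⟩ := h id hid x
      refine ⟨U, hU, hxU, hcof.subset ?_⟩
      intro m hm
      simp only [Set.mem_compl_iff, Set.mem_range, not_exists]
      intro n hn'
      exact hn n (by simpa [hn'] using hm)
    constructor
    · intro x
      obtain ⟨U, hU, hxU, hF⟩ := key x
      refine hF.subset fun n hn => ?_
      simp only [Set.mem_setOf_eq] at hn ⊢
      rw [hn]; exact hxU
    · intro x
      obtain ⟨U, hU, hxU, hF⟩ := key x
      refine ⟨U, hU, hxU, (hF.image s).subset ?_⟩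
      rintro y ⟨hyU, m, rfl⟩
      exact ⟨m, hyU, rfl⟩
  · rintro ⟨hfib, hloc⟩ φ ⟨hφmono, hφcof⟩ x
    obtain ⟨U, hU, hxU, hfin⟩ := hloc x
    have hF : {m : ℕ | s m ∈ U}.Finite := by
      have hsub : {m : ℕ | s m ∈ U} ⊆ ⋃ y ∈ U ∩ Set.range s, {m | s m = y} := by
        intro m hm
        exact Set.mem_biUnion ⟨hm, m, rfl⟩ rfl
      exact (hfin.biUnion fun y _ => hfib y).subset hsub
    have hA : {k : ℕ | s (φ k) ∈ U}.Finite :=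
      Set.Finite.preimage (f := φ) hφmono.injective.injOn hF
    obtain ⟨N, hN⟩ := hA.bddAbove
    refine ⟨U, hU, hxU, fun n => n + (N + 1), ⟨strictMono_id.add_const (N + 1), ?_⟩, ?_⟩
    · apply Set.Finite.subset (Set.finite_Iio (N + 1))
      intro m hm
      simp only [Set.mem_compl_iff, Set.mem_range, not_exists] at hm
      by_contra h'
      simp only [Set.mem_Iio, not_lt] at h'
      exact hm (m - (N + 1)) (by omega)
    · intro n hn
      have : n + (N + 1) ≤ N := hN hn
      omega
end

section
/- Let X be a topological space, 𝒞 the set of strictly increasing functions ℕ → ℕ with cofinite range, and for s : ℕ → X say s ∈ SDS^𝒞_X if for every φ ∈ 𝒞 and every x ∈ X there exist an open neighborhood U of x and ψ ∈ 𝒞 with s(φ(ψ(n))) ∉ U for all n. Then: (1) every injective sequence s : ℕ → X whose range is closed and relatively discrete belongs to SDS^𝒞_X; (2) every s ∈ SDS^𝒞_X has no convergent subsequence (for every strictly increasing φ : ℕ → ℕ and every y ∈ X, the sequence n ↦ s(φ(n)) does not converge to y); and (3) if X is T1, then every s ∈ SDS^𝒞_X has range which is closed and relatively discrete in X. -/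
lemma id_mem_cofin : (id : ℕ → ℕ) ∈ CofinRange :=
  ⟨strictMono_id, by simp⟩

lemma shift_mem_cofin (k : ℕ) : (fun n => n + (k + 1)) ∈ CofinRange := by
  refine ⟨fun a b h => Nat.add_lt_add_right h _, Set.Finite.subset (Set.finite_Iio (k + 1)) ?_⟩
  intro m hm
  simp only [Set.mem_compl_iff, Set.mem_range] at hm
  by_contra h
  simp only [Set.mem_Iio, not_lt] at h
  exact hm ⟨m - (k + 1), by omega⟩

/-- (1) every injective sequence with closed and relatively
discrete range is in `SDS^𝒞_X`; (2) every member of `SDS^𝒞_X` has no convergent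
subsequence; (3) if `X` is T1, every member of `SDS^𝒞_X` has closed, relatively
discrete range. -/
theorem stmt14 {X : Type*} [TopologicalSpace X] :
    (∀ s : ℕ → X, Function.Injective s → IsClosed (Set.range s) →
      (∀ a ∈ Set.range s, ∃ V : Set X, IsOpen V ∧ V ∩ Set.range s = {a}) →
      SDSC s) ∧
    (∀ s : ℕ → X, SDSC s → ∀ φ : ℕ → ℕ, StrictMono φ → ∀ y : X,
      ¬ Filter.Tendsto (fun n => s (φ n)) Filter.atTop (nhds y)) ∧
    (T1Space X → ∀ s : ℕ → X, SDSC s → IsClosed (Set.range s) ∧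
      ∀ a ∈ Set.range s, ∃ V : Set X, IsOpen V ∧ V ∩ Set.range s = {a}) := by
  refine ⟨?_, ?_, ?_⟩
  · -- Part 1
    intro s hinj hclosed hdisc φ hφ x
    by_cases hx : x ∈ Set.range s
    · obtain ⟨k, rfl⟩ := hx
      obtain ⟨V, hV, hVr⟩ := hdisc (s k) ⟨k, rfl⟩
      have hkV : s k ∈ V := by
        have : s k ∈ V ∩ Set.range s := by rw [hVr]; rfl
        exact this.1
      refine ⟨V, hV, hkV, fun n => n + (k + 1), shift_mem_cofin k, fun n hmem => ?_⟩
      have h1 : s (φ (n + (k + 1))) ∈ V ∩ Set.range s := ⟨hmem, ⟨_, rfl⟩⟩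
      rw [hVr] at h1
      have h2 : φ (n + (k + 1)) = k := hinj h1
      have h3 : n + (k + 1) ≤ φ (n + (k + 1)) := hφ.1.le_apply
      omega
    · exact ⟨(Set.range s)ᶜ, hclosed.isOpen_compl, hx, id, id_mem_cofin,
        fun n h => h ⟨_, rfl⟩⟩
  · -- Part 2
    intro s hs φ hφ y hconv
    obtain ⟨U, hU, hyU, ψ, ⟨hψm, hψf⟩, hmiss⟩ := hs id id_mem_cofin y
    have hev : ∀ᶠ n in Filter.atTop, s (φ n) ∈ U := hconv (hU.mem_nhds hyU)
    obtain ⟨N, hN⟩ := Filter.eventually_atTop.mp hev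
    obtain ⟨B, hB⟩ := hψf.bddAbove
    set n := max N (B + 1) with hn
    have hφn : φ n ∈ Set.range ψ := by
      by_contra h
      have := hB h
      have : n ≤ φ n := hφ.le_apply
      omega
    obtain ⟨m, hm⟩ := hφn
    have : s (ψ m) ∈ U := by rw [hm]; exact hN n (le_max_left _ _)
    exact hmiss m this
  · -- Part 3
    intro ht s hs
    constructor
    · rw [← isOpen_compl_iff, isOpen_iff_forall_mem_open]
      intro x hx
      obtain ⟨U, hU, hxU, ψ, ⟨hψm, hψf⟩, hmiss⟩ := hs id id_mem_cofin x
      refine ⟨U \ (s '' (Set.range ψ)ᶜ), ?_, ?_, ?_⟩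
      · intro z ⟨hzU, hz⟩ hzr
        obtain ⟨m, rfl⟩ := hzr
        by_cases hm : m ∈ Set.range ψ
        · obtain ⟨n, rfl⟩ := hm
          exact hmiss n hzU
        · exact hz ⟨m, hm, rfl⟩
      · exact hU.sdiff (hψf.image s).isClosed
      · exact ⟨hxU, fun ⟨m, _, hm⟩ => hx ⟨m, hm⟩⟩
    · rintro a ⟨k, rfl⟩
      obtain ⟨U, hU, hxU, ψ, ⟨hψm, hψf⟩, hmiss⟩ := hs id id_mem_cofin (s k)
      set F : Set X := s '' (Set.range ψ)ᶜ \ {s k} with hF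
      have hFfin : F.Finite := ((hψf.image s).subset Set.diff_subset)
      refine ⟨U ∩ Fᶜ, hU.inter hFfin.isClosed.isOpen_compl, ?_⟩
      apply Set.Subset.antisymm
      · rintro z ⟨⟨hzU, hzF⟩, m, rfl⟩
        have hm : m ∉ Set.range ψ := by
          rintro ⟨n, rfl⟩
          exact hmiss n hzU
        have : s m ∈ s '' (Set.range ψ)ᶜ := ⟨m, hm, rfl⟩
        by_contra hne
        exact hzF ⟨this, hne⟩
      · rintro z hz
        rw [Set.mem_singleton_iff] at hz
        subst hz
        exact ⟨⟨hxU, fun h => h.2 rfl⟩, ⟨k, rfl⟩⟩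
end

section
/- Let ι be an uncountable index set and let Z = ℤ^ι be the product of ι many copies of the discrete space of integers, with the product topology. Then Player Two has a winning Markov strategy in the injective closed discrete selection game on Z: there is a function τ assigning to each nonempty open subset U of Z and each n ∈ ℕ a point τ(U,n) ∈ U, such that for every sequence ⟨U_n : n ∈ ℕ⟩ of nonempty open subsets of Z, the map n ↦ τ(U_n, n) is injective and the set {τ(U_n, n) : n ∈ ℕ} is closed and relatively discrete in Z. In particular, Z is injectively discretely selective. -/
/-- A space is injectively discretely selective if for every sequence of
nonempty open sets one can select pairwise distinct points whose set of values
is closed and relatively discrete. -/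
def InjDiscretelySelective (X : Type*) [TopologicalSpace X] : Prop :=
  ∀ U : ℕ → Set X, (∀ n, IsOpen (U n)) → (∀ n, (U n).Nonempty) →
    ∃ x : ℕ → X, (∀ n, x n ∈ U n) ∧ Function.Injective x ∧
      IsClosed (Set.range x) ∧
      ∀ y ∈ Set.range x, ∃ V : Set X, IsOpen V ∧ V ∩ Set.range x = {y}

lemma stmt16_key {ι : Type*} {U : Set (ι → ℤ)} (hU : IsOpen U) {p : ι → ℤ} (hp : p ∈ U) :
    ∃ F : Finset ι, ∀ w : ι → ℤ, (∀ i ∈ F, w i = p i) → w ∈ U := by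
  obtain ⟨I, u, hu, hsub⟩ := isOpen_pi_iff.mp hU p hp
  refine ⟨I, fun w hw => hsub fun i hi => ?_⟩
  rw [hw i hi]
  exact (hu i hi).2

lemma stmt16_coord_open {ι : Type*} (k : ι) (c : ℤ) :
    IsOpen {w : ι → ℤ | w k = c} := by
  have : {w : ι → ℤ | w k = c} = (fun w : ι → ℤ => w k) ⁻¹' {c} := rfl
  rw [this]
  exact (continuous_apply k).isOpen_preimage _ (isOpen_discrete _)

/-- for an uncountable index set `ι`, Player Two has a winning
Markov strategy in the injective closed discrete selection game on `ℤ^ι` (with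
`ℤ` discrete and the product topology): there is `τ` assigning to each nonempty
open `U ⊆ ℤ^ι` and `n ∈ ℕ` a point `τ(U,n) ∈ U` such that for every sequence
`⟨U_n⟩` of nonempty open sets, `n ↦ τ(U_n, n)` is injective with closed and
relatively discrete range.  In particular, `ℤ^ι` is injectively discretely
selective. -/
theorem stmt16 (ι : Type*) [Uncountable ι] :
    (∃ τ : Set (ι → ℤ) → ℕ → (ι → ℤ),
      (∀ (U : Set (ι → ℤ)) (n : ℕ), IsOpen U → U.Nonempty → τ U n ∈ U) ∧
      ∀ U : ℕ → Set (ι → ℤ), (∀ n, IsOpen (U n)) → (∀ n, (U n).Nonempty) →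
        Function.Injective (fun n => τ (U n) n) ∧
        IsClosed (Set.range fun n => τ (U n) n) ∧
        ∀ y ∈ Set.range (fun n => τ (U n) n), ∃ V : Set (ι → ℤ),
          IsOpen V ∧ V ∩ Set.range (fun n => τ (U n) n) = {y}) ∧
    InjDiscretelySelective (ι → ℤ) := by
  classical
  have hsel : ∀ U : Set (ι → ℤ), ∃ (p : ι → ℤ) (F : Finset ι),
      IsOpen U → U.Nonempty → p ∈ U ∧ ∀ w : ι → ℤ, (∀ i ∈ F, w i = p i) → w ∈ U := by
    intro U
    by_cases h : IsOpen U ∧ U.Nonempty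
    · obtain ⟨p, hp⟩ := h.2
      obtain ⟨F, hF⟩ := stmt16_key h.1 hp
      exact ⟨p, F, fun _ _ => ⟨hp, hF⟩⟩
    · exact ⟨fun _ => 0, ∅, fun h1 h2 => absurd ⟨h1, h2⟩ h⟩
  choose p F hpF using hsel
  set τ : Set (ι → ℤ) → ℕ → (ι → ℤ) :=
    fun U n i => if i ∈ F U then p U i else (n : ℤ) with hτ
  have hmem : ∀ (U : Set (ι → ℤ)) (n : ℕ), IsOpen U → U.Nonempty → τ U n ∈ U := by
    intro U n hO hne
    exact (hpF U hO hne).2 _ (fun i hi => if_pos hi)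
  have hmain : ∀ U : ℕ → Set (ι → ℤ), (∀ n, IsOpen (U n)) → (∀ n, (U n).Nonempty) →
      Function.Injective (fun n => τ (U n) n) ∧
      IsClosed (Set.range fun n => τ (U n) n) ∧
      ∀ y ∈ Set.range (fun n => τ (U n) n), ∃ V : Set (ι → ℤ),
        IsOpen V ∧ V ∩ Set.range (fun n => τ (U n) n) = {y} := by
    intro U hO hne
    set x : ℕ → (ι → ℤ) := fun n => τ (U n) n with hx
    -- find a coordinate outside all supports
    have hScount : (⋃ n, ((F (U n) : Set ι))).Countable :=
      Set.countable_iUnion fun n => (F (U n)).countable_toSet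
    have : ∃ i : ι, i ∉ ⋃ n, ((F (U n) : Set ι)) := by
      by_contra h
      push_neg at h
      have : (Set.univ : Set ι).Countable := by
        refine hScount.mono ?_
        intro i _
        exact h i
      exact not_countable (Set.countable_univ_iff.mp this)
    obtain ⟨i, hi⟩ := this
    have hxi : ∀ n : ℕ, x n i = (n : ℤ) := by
      intro n
      have : i ∉ F (U n) := fun h => hi (Set.mem_iUnion.mpr ⟨n, h⟩)
      simp only [hx, hτ, if_neg this]
    have hinj : Function.Injective x := by
      intro m n h
      have := congrFun h i
      rw [hxi m, hxi n] at this
      exact_mod_cast this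
    refine ⟨hinj, ?_, ?_⟩
    · -- closed
      rw [← isOpen_compl_iff]
      rw [isOpen_iff_forall_mem_open]
      intro z hz
      by_cases hex : ∃ n : ℕ, (n : ℤ) = z i
      · obtain ⟨n, hn⟩ := hex
        have hzn : z ≠ x n := fun h => hz ⟨n, h.symm⟩
        obtain ⟨j, hj⟩ := Function.ne_iff.mp hzn
        refine ⟨{w | w i = z i ∧ w j = z j}, ?_, ?_, ⟨rfl, rfl⟩⟩
        · intro w ⟨hwi, hwj⟩ ⟨m, hm⟩
          have hmi : (m : ℤ) = z i := by rw [← hxi m, hm, hwi]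
          have hmn : m = n := by exact_mod_cast hmi.trans hn.symm
          apply hj
          rw [← hwj, ← hm, hmn]
        · have : {w : ι → ℤ | w i = z i ∧ w j = z j}
              = {w : ι → ℤ | w i = z i} ∩ {w : ι → ℤ | w j = z j} := rfl
          rw [this]
          exact (stmt16_coord_open i (z i)).inter (stmt16_coord_open j (z j))
      · refine ⟨{w | w i = z i}, ?_, ?_, rfl⟩
        · intro w hwi ⟨m, hm⟩
          exact hex ⟨m, by rw [← hxi m, hm, hwi]⟩
        · exact stmt16_coord_open i (z i)
    · -- relatively discrete
      rintro y ⟨n, rfl⟩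
      refine ⟨{w | w i = (n : ℤ)}, stmt16_coord_open i (n : ℤ), ?_⟩
      ext w
      constructor
      · rintro ⟨hwi, m, hm⟩
        have : (m : ℤ) = (n : ℤ) := by rw [← hxi m, hm]; exact hwi
        have hmn : m = n := by exact_mod_cast this
        simp only [Set.mem_singleton_iff, ← hm, hmn]
      · rintro rfl
        exact ⟨hxi n, n, rfl⟩
  refine ⟨⟨τ, hmem, hmain⟩, ?_⟩
  intro U hO hne
  obtain ⟨hinj, hcl, hdisc⟩ := hmain U hO hne
  exact ⟨fun n => τ (U n) n, fun n => hmem (U n) n (hO n) (hne n), hinj, hcl, hdisc⟩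
end
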